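/- arXiv:2410.02243 — 3 statements merged into one kernel-verified Lean document; each statement's English description precedes it below -/
import Mathlib

section
/- Let F, G be natural numbers with F ≤ G ≤ F², and for 1 ≤ k ≤ F define F'_k = k·⌊F/k⌋, G'_k = (F'_k/k)·⌊G/(F'_k/k)⌋, and M_k = k + k·G'_k/F'_k. Then M_{k+1}/M_k ≤ 8 for every 1 ≤ k ≤ F-1. -/
/-- `F'_k = k ⌊F/k⌋`. -/
def Fk (F k : ℕ) : ℕ := k * (F / k)

/-- `G'_k = (F'_k/k) ⌊G/(F'_k/k)⌋`. -/
def Gk (F G k : ℕ) : ℕ := (Fk F k / k) * (G / (Fk F k / k))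

/-- `M_k = k + k G'_k / F'_k`. -/
def Mk (F G k : ℕ) : ℕ := k + k * Gk F G k / Fk F k

lemma Mk_eq (F G k : ℕ) (hk1 : 1 ≤ k) (hkF : k ≤ F) :
    Mk F G k = k + G / (F / k) := by
  have hk0 : k ≠ 0 := by omega
  have hq : 1 ≤ F / k := Nat.one_le_div_iff (by omega) |>.mpr hkF
  have hFk : Fk F k / k = F / k := by
    simp [Fk, Nat.mul_div_cancel_left _ (by omega : 0 < k)]
  have : k * Gk F G k / Fk F k = G / (F / k) := by
    rw [Gk, hFk, Fk]
    rw [show k * (F / k * (G / (F / k))) = (k * (F / k)) * (G / (F / k)) by ring]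
    exact Nat.mul_div_cancel_left _ (by positivity)
  rw [Mk, this]

theorem stmt6 (F G k : ℕ) (hF : 1 ≤ F) (h1 : F ≤ G) (h2 : G ≤ F ^ 2)
    (hk1 : 1 ≤ k) (hk2 : k ≤ F - 1) :
    Mk F G (k + 1) ≤ 8 * Mk F G k := by
  have hkF : k ≤ F := by omega
  have hk1F : k + 1 ≤ F := by omega
  rw [Mk_eq F G k hk1 hkF, Mk_eq F G (k + 1) (by omega) hk1F]
  set q := F / k with hq
  set p := F / (k + 1) with hp
  have hq1 : 1 ≤ q := Nat.one_le_div_iff (by omega) |>.mpr hkF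
  have hp1 : 1 ≤ p := Nat.one_le_div_iff (by omega) |>.mpr hk1F
  set a := G / q with ha
  set b := G / p with hb
  -- p ≥ q/2
  have hpq : q / 2 ≤ p := by
    have : F / (2 * k) ≤ F / (k + 1) :=
      Nat.div_le_div_left (by omega) (by omega)
    calc q / 2 = F / (k * 2) := by rw [hq, Nat.div_div_eq_div_mul]
    _ = F / (2 * k) := by ring_nf
    _ ≤ p := this
  have key : b ≤ 3 * a + 2 := by
    rcases Nat.lt_or_ge q 2 with h | h
    · -- q = 1, so a = G, b ≤ G
      have hq1' : q = 1 := by omega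
      have : b ≤ G := by
        rw [hb]
        calc G / p ≤ G / 1 := Nat.div_le_div_left hp1 (by omega)
        _ = G := Nat.div_one G
      have : b ≤ a := by rw [ha, hq1', Nat.div_one]; exact this
      omega
    · set m := q / 2 with hm
      have hm1 : 1 ≤ m := by omega
      have hbm : b ≤ G / m := Nat.div_le_div_left hpq (by omega)
      have hq3m : q ≤ 3 * m := by omega
      have ham : G / (3 * m) ≤ a := Nat.div_le_div_left hq3m (by omega)
      have h3 : G / (3 * m) = (G / m) / 3 := by
        rw [Nat.div_div_eq_div_mul, Nat.mul_comm 3 m]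
      have := Nat.div_add_mod (G / m) 3
      have hmod := Nat.mod_lt (G / m) (by omega : 0 < 3)
      omega
  omega
end

section
/- Let M ≥ F + G and let Φ be a bisymmetric Boolean function on [M]^{[F]} × [M]^{[G]}. For any M' with F + G ≤ M' < M, let Φ' be the restriction of Φ to input pairs with range contained in [M']. Then for every 0 < ε < 1/2 and every degree d: there is a polynomial of degree ≤ d in z_1,…,z_M, w_1,…,w_M that ε-approximates Φ if and only if there is a polynomial of degree ≤ d in z'_1,…,z'_{M'}, w'_1,…,w'_{M'} that ε-approximates Φ'. -/
/-!
Restricting is easy: substitute `0` for the variables indexed outside `[M']`, because the count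
vectors of functions into `[M']` vanish there. For the converse, replace every monomial of the
degree-`d` approximant `Q'` by a weighted sum of its images under all embeddings `[M'] ↪ [M]`.
At a count vector supported in the range of one embedding `e`, only the embeddings of the
monomial's variables into `range e` contribute, and the weights are chosen so that the result is
the average of `Q'` over the `S_{M'}`-translates of the point pulled back along `e`. Every pair
`(f, g)` uses at most `F + G ≤ M'` values, so such an `e` exists; by bisymmetry each translate is
an `ε`-approximation of `Φ f g`, and so is their average.
-/

open Finset MvPolynomial Function MulAction
open scoped BigOperators

theorem MulAction.expect_smul_eq_expect {G X M : Type*} [Group G] [Fintype G] [MulAction G X]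
    [IsPretransitive G X] [Fintype X] [AddCommMonoid M] [Module ℚ≥0 M] (f : X → M) (x : X) :
    𝔼 g : G, f (g • x) = 𝔼 y, f y := by
  have hbase : ∀ y, 𝔼 g : G, f (g • y) = 𝔼 g : G, f (g • x) := by
    intro y
    obtain ⟨h, rfl⟩ := exists_smul_eq G x y
    exact Fintype.expect_equiv (Equiv.mulRight h) _ _ fun g => by simp [mul_smul]
  have : Nonempty X := ⟨x⟩
  calc 𝔼 g : G, f (g • x) = 𝔼 y : X, 𝔼 g : G, f (g • y) := by
        simp only [hbase, Fintype.expect_const]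
    _ = 𝔼 g : G, 𝔼 y, f (g • y) := Finset.expect_comm _ _ _
    _ = 𝔼 g : G, 𝔼 y, f y := Finset.expect_congr rfl fun g _ =>
        Fintype.expect_equiv (MulAction.toPerm g : Equiv.Perm X) _ f fun _ => rfl
    _ = 𝔼 y, f y := Fintype.expect_const _

namespace Function.Embedding

instance isPretransitive_perm {κ β : Type*} [Finite κ] :
    IsPretransitive (Equiv.Perm β) (κ ↪ β) :=
  ⟨Equiv.Perm.exists_smul_eq_embedding⟩

theorem expect_trans_eq_expect {κ α β M : Type*} [Fintype κ] [Fintype α] [Fintype β]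
    [DecidableEq β] [AddCommMonoid M] [Module ℚ≥0 M] [Nonempty (α ↪ β)]
    (i : κ ↪ α) (F : (κ ↪ β) → M) :
    𝔼 u : α ↪ β, F (i.trans u) = 𝔼 r : κ ↪ β, F r := by
  obtain ⟨u₀⟩ := ‹Nonempty (α ↪ β)›
  calc 𝔼 u : α ↪ β, F (i.trans u) = 𝔼 σ : Equiv.Perm β, F (σ • i.trans u₀) :=
        (MulAction.expect_smul_eq_expect (fun u => F (i.trans u)) u₀).symm
    _ = 𝔼 r : κ ↪ β, F r := MulAction.expect_smul_eq_expect F _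

theorem sum_eq_sum_trans_of_eq_zero {κ α β M : Type*} [Fintype κ] [Fintype α] [Fintype β]
    [AddCommMonoid M] (e : α ↪ β) (F : (κ ↪ β) → M)
    (hF : ∀ r : κ ↪ β, ¬ Set.range r ⊆ Set.range e → F r = 0) :
    ∑ r : κ ↪ β, F r = ∑ r : κ ↪ α, F (r.trans e) := by
  refine (Fintype.sum_of_injective (fun r : κ ↪ α => r.trans e) (fun r s h => ?_) _ _
    (fun r hr => hF r ?_) fun _ => rfl).symm
  · ext k
    exact e.injective (DFunLike.congr_fun h k)
  · rintro hre
    refine hr ⟨(r.codRestrict _ fun k => hre ⟨k, rfl⟩).trans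
      (Equiv.ofInjective e e.injective).symm.toEmbedding, ?_⟩
    ext k
    simp [Equiv.apply_ofInjective_symm]

theorem exists_range_superset {γ δ α β : Type*} [Fintype γ] [Fintype δ] [Fintype α]
    [Fintype β] [DecidableEq β] (f : γ → β) (g : δ → β)
    (h : Fintype.card γ + Fintype.card δ ≤ Fintype.card α) (h' : Fintype.card α ≤ Fintype.card β) :
    ∃ e : α ↪ β, Set.range f ⊆ Set.range e ∧ Set.range g ⊆ Set.range e := by
  set s := univ.image f ∪ univ.image g
  have hs : s.card ≤ Fintype.card α :=
    (card_union_le _ _).trans ((add_le_add card_image_le card_image_le).trans h)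
  obtain ⟨t, hst, -, ht⟩ := exists_subsuperset_card_eq (subset_univ s) hs (by simpa using h')
  let eα : α ≃ t := Fintype.equivOfCardEq (by simp [ht])
  have hrange : ∀ b ∈ s, b ∈ Set.range (eα.toEmbedding.trans (Embedding.subtype _)) :=
    fun b hb => ⟨eα.symm ⟨b, hst hb⟩, by simp⟩
  exact ⟨_, Set.range_subset_iff.2 fun i => hrange _ (by simp [s]),
    Set.range_subset_iff.2 fun i => hrange _ (by simp [s])⟩

end Function.Embedding

open Function.Embedding in
theorem expect_prod_embedding_eq_expect_prod_perm {α β R : Type*} [Fintype α] [Fintype β]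
    [DecidableEq α] [DecidableEq β] [Field R] [CharZero R] (e : α ↪ β) (K : Finset α)
    (p : α → β → R) (hK : ∀ j ∉ K, ∀ x, p j x = 1)
    (he : ∀ j ∈ K, ∀ x ∉ Set.range e, p j x = 0) :
    (Fintype.card (K ↪ β) : R) / Fintype.card (K ↪ α) * 𝔼 u : α ↪ β, ∏ j, p j (u j) =
      𝔼 τ : Equiv.Perm α, ∏ j, p j (e (τ j)) := by
  set F : (K ↪ β) → R := fun r => ∏ j : K, p j (r j)
  have hrestrict : ∀ u : α → β, ∏ j, p j (u j) = ∏ j : K, p j (u j) := fun u =>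
    (prod_subset (subset_univ K) fun j _ hj => hK j hj _).symm.trans (prod_coe_sort K _).symm
  have : Nonempty (α ↪ β) := ⟨e⟩
  have hβ : 𝔼 u : α ↪ β, ∏ j, p j (u j) = 𝔼 r : K ↪ β, F r := by
    simp only [hrestrict]
    exact expect_trans_eq_expect (Embedding.subtype _) F
  have hα : 𝔼 τ : Equiv.Perm α, ∏ j, p j (e (τ j)) = 𝔼 r : K ↪ α, F (r.trans e) := by
    simp only [hrestrict]
    exact MulAction.expect_smul_eq_expect (G := Equiv.Perm α) (fun r => F (r.trans e))
      (Embedding.subtype _)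
  have hsum : ∑ r : K ↪ β, F r = ∑ r : K ↪ α, F (r.trans e) := by
    refine sum_eq_sum_trans_of_eq_zero e F fun r hr => ?_
    obtain ⟨_, ⟨k, rfl⟩, hk⟩ := Set.not_subset.1 hr
    exact prod_eq_zero (mem_univ k) (he k k.2 _ hk)
  have : Nonempty (K ↪ α) := ⟨Embedding.subtype _⟩
  have : Nonempty (K ↪ β) := ⟨(Embedding.subtype _).trans e⟩
  have hα0 : (Fintype.card (K ↪ α) : R) ≠ 0 := Nat.cast_ne_zero.2 Fintype.card_ne_zero
  have hβ0 : (Fintype.card (K ↪ β) : R) ≠ 0 := Nat.cast_ne_zero.2 Fintype.card_ne_zero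
  rw [hβ, hα, Fintype.expect_eq_sum_div_card, Fintype.expect_eq_sum_div_card, hsum]
  field_simp

namespace MvPolynomial

theorem totalDegree_killCompl_le {R σ τ : Type*} [CommSemiring R] {f : σ → τ}
    (hf : Injective f) (p : MvPolynomial τ R) :
    (killCompl hf p).totalDegree ≤ p.totalDegree := by
  refine Finset.sup_le fun s hs => ?_
  rw [mem_support_iff, coeff_killCompl] at hs
  calc s.sum (fun _ e => e) = (s.mapDomain f).sum (fun _ e => e) :=
        (Finsupp.sum_mapDomain_index (h := fun _ e => e) (fun _ => rfl) (fun _ _ _ => rfl)).symm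
    _ ≤ p.totalDegree := le_totalDegree (mem_support_iff.2 hs)

theorem eval_killCompl {R σ τ : Type*} [CommSemiring R] {f : σ → τ}
    (hf : Injective f) {v : τ → R} (hv : ∀ i ∉ Set.range f, v i = 0) (p : MvPolynomial τ R) :
    eval (v ∘ f) (killCompl hf p) = eval v p := by
  classical
  change aeval (v ∘ f) (killCompl hf p) = aeval v p
  rw [killCompl, comp_aeval_apply]
  congr 2
  funext i
  by_cases hi : i ∈ Set.range f
  · obtain ⟨j, rfl⟩ := hi
    simp
  · simp [hi, hv i hi]

theorem eval_eq_sum_coeff_mul_eval_monomial {σ R : Type*} [CommSemiring R] (v : σ → R)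
    (P : MvPolynomial σ R) :
    eval v P = ∑ μ ∈ P.support, P.coeff μ * eval v (monomial μ 1) := by
  conv_lhs => rw [P.as_sum]
  simp only [map_sum, eval_monomial, one_mul]

variable {α β R : Type*}

theorem eval_rename_sumMap_monomial [CommSemiring R] [Fintype α] (u : α → β) (v : β ⊕ β → R)
    (μ : (α ⊕ α) →₀ ℕ) :
    eval v (rename (Sum.map u u) (monomial μ 1)) =
      ∏ j, v (.inl (u j)) ^ μ (.inl j) * v (.inr (u j)) ^ μ (.inr j) := by
  rw [eval_rename, eval_monomial, one_mul, Finsupp.prod_fintype _ _ fun _ => pow_zero _,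
    Fintype.prod_sum_type, ← prod_mul_distrib]
  rfl

variable [Fintype α] [Fintype β] [Field R]

def pairSupport (μ : (α ⊕ α) →₀ ℕ) : Finset α :=
  univ.filter fun j => μ (.inl j) ≠ 0 ∨ μ (.inr j) ≠ 0

variable (β) in
/-- At a point supported in the range of an embedding `e`, only the embeddings mapping
`pairSupport μ` into `range e` contribute; the weight turns their sum into the average over
`Equiv.Perm α` (`eval_bisymmetricExtension`). -/
noncomputable def bisymmetricExtension (P : MvPolynomial (α ⊕ α) R) : MvPolynomial (β ⊕ β) R :=
  ∑ μ ∈ P.support,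
    (P.coeff μ * Fintype.card (pairSupport μ ↪ β) /
        (Fintype.card (pairSupport μ ↪ α) * Fintype.card (α ↪ β))) •
      ∑ u : α ↪ β, rename (Sum.map u u) (monomial μ 1)

theorem totalDegree_bisymmetricExtension_le (P : MvPolynomial (α ⊕ α) R) :
    (bisymmetricExtension β P).totalDegree ≤ P.totalDegree :=
  totalDegree_finsetSum_le fun _ hμ => (totalDegree_smul_le _ _).trans <|
    totalDegree_finsetSum_le fun _ _ => (totalDegree_rename_le _ _).trans <|
      (totalDegree_monomial_le _ _).trans (le_totalDegree hμ)

theorem eval_bisymmetricExtension [DecidableEq α] [DecidableEq β] [CharZero R] (e : α ↪ β)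
    {v : β ⊕ β → R} (hv : ∀ i ∉ Set.range (Sum.map e e), v i = 0) (P : MvPolynomial (α ⊕ α) R) :
    eval v (bisymmetricExtension β P) =
      𝔼 τ : Equiv.Perm α, eval (v ∘ Sum.map (e ∘ τ) (e ∘ τ)) P := by
  have hmonomial : ∀ μ : (α ⊕ α) →₀ ℕ,
      Fintype.card (pairSupport μ ↪ β) /
          (Fintype.card (pairSupport μ ↪ α) * Fintype.card (α ↪ β)) *
        eval v (∑ u : α ↪ β, rename (Sum.map u u) (monomial μ 1)) =
      𝔼 τ : Equiv.Perm α, eval (v ∘ Sum.map (e ∘ τ) (e ∘ τ)) (monomial μ 1) := by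
    intro μ
    simp only [← eval_rename, map_sum, eval_rename_sumMap_monomial, Function.comp_apply]
    rw [← expect_prod_embedding_eq_expect_prod_perm e (pairSupport μ)
      (fun j x => v (.inl x) ^ μ (.inl j) * v (.inr x) ^ μ (.inr j)),
      Fintype.expect_eq_sum_div_card]
    · ring
    · intro j hj x
      simp_all [pairSupport]
    · intro j hj x hx
      have hl : v (.inl x) = 0 := hv _ (by simpa using hx)
      have hr : v (.inr x) = 0 := hv _ (by simpa using hx)
      simp only [pairSupport, mem_filter, mem_univ, true_and] at hj
      rcases hj with h | h <;> simp [hl, hr, h]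
  simp only [bisymmetricExtension, map_sum, smul_eval, eval_eq_sum_coeff_mul_eval_monomial _ P,
    expect_sum_comm, ← mul_expect, ← hmonomial]
  exact sum_congr rfl fun μ _ => by ring

end MvPolynomial

section CountVector

variable {γ δ α β : Type*} [Fintype γ] [Fintype δ] [DecidableEq β]

def fiberCard (f : γ → β) (b : β) : ℝ := (univ.filter fun i => f i = b).card

def countVec (f : γ → β) (g : δ → β) : β ⊕ β → ℝ := Sum.elim (fiberCard f) (fiberCard g)

theorem fiberCard_comp_apply [DecidableEq α] {u : α → β} (hu : Injective u) (f : γ → α)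
    (a : α) : fiberCard (u ∘ f) (u a) = fiberCard f a := by
  simp [fiberCard, hu.eq_iff]

theorem fiberCard_eq_zero {f : γ → β} {b : β} (hb : b ∉ Set.range f) : fiberCard f b = 0 := by
  simpa [fiberCard, filter_eq_empty_iff] using hb

theorem countVec_comp_sumMap [DecidableEq α] {u : α → β} (hu : Injective u) (f : γ → α)
    (g : δ → α) : countVec (u ∘ f) (u ∘ g) ∘ Sum.map u u = countVec f g := by
  ext (a | a) <;> exact fiberCard_comp_apply hu _ a

theorem countVec_eq_zero {u : α → β} {f : γ → β} {g : δ → β} (hf : Set.range f ⊆ Set.range u)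
    (hg : Set.range g ⊆ Set.range u) {i : β ⊕ β} (hi : i ∉ Set.range (Sum.map u u)) :
    countVec f g i = 0 := by
  rcases i with b | b
  · refine fiberCard_eq_zero fun hb => hi ?_
    obtain ⟨a, ha⟩ := hf hb
    exact ⟨.inl a, by simp [ha]⟩
  · refine fiberCard_eq_zero fun hb => hi ?_
    obtain ⟨a, ha⟩ := hg hb
    exact ⟨.inr a, by simp [ha]⟩

end CountVector

def ApproximatesBool (ε x : ℝ) (b : Bool) : Prop :=
  x ∈ Set.Icc 0 1 ∧ |x - if b then 1 else 0| ≤ ε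

theorem ApproximatesBool.expect {ι : Type*} [Fintype ι] [Nonempty ι] {ε : ℝ} {x : ι → ℝ}
    {b : Bool} (h : ∀ i, ApproximatesBool ε (x i) b) : ApproximatesBool ε (𝔼 i, x i) b := by
  set c : ℝ := if b then 1 else 0
  refine ⟨⟨le_expect univ_nonempty fun i _ => (h i).1.1,
    expect_le univ_nonempty fun i _ => (h i).1.2⟩, ?_⟩
  calc |𝔼 i, x i - c| = |𝔼 i, (x i - c)| := by rw [expect_sub_distrib, Fintype.expect_const]
    _ ≤ 𝔼 i, |x i - c| := abs_expect_le _ _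
    _ ≤ ε := expect_le univ_nonempty fun i _ => (h i).2

theorem apply_comp_embedding_eq_of_perm_invariant {γ δ α β : Type*} [Finite α]
    {Φ : (γ → β) → (δ → β) → Bool}
    (hΦ : ∀ f g (σ : Equiv.Perm β), Φ (σ ∘ f) (σ ∘ g) = Φ f g)
    (u u' : α ↪ β) (f : γ → α) (g : δ → α) : Φ (u ∘ f) (u ∘ g) = Φ (u' ∘ f) (u' ∘ g) := by
  obtain ⟨σ, hσ⟩ := Equiv.Perm.exists_smul_eq_embedding u u'
  rw [← hΦ (u ∘ f) (u ∘ g) σ, ← hσ]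
  rfl

open Classical in
theorem stmt14_general (F G M M' : ℕ) (hFG : F + G ≤ M') (hM' : M' < M) (d : ℕ) (ε : ℝ)
    (Φ : (Fin F → Fin M) → (Fin G → Fin M) → Bool)
    (hsym : ∀ (f : Fin F → Fin M) (g : Fin G → Fin M) (πF : Equiv.Perm (Fin F))
      (πG : Equiv.Perm (Fin G)) (σ : Equiv.Perm (Fin M)),
      Φ (σ ∘ f ∘ πF) (σ ∘ g ∘ πG) = Φ f g) :
    (∃ Q : MvPolynomial (Fin M ⊕ Fin M) ℝ,
      Q.totalDegree ≤ d ∧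
      ∀ (f : Fin F → Fin M) (g : Fin G → Fin M),
        MvPolynomial.eval
            (Sum.elim
              (fun jj : Fin M => ((Finset.univ.filter (fun i => f i = jj)).card : ℝ))
              (fun jj : Fin M => ((Finset.univ.filter (fun k => g k = jj)).card : ℝ))) Q ∈
          Set.Icc (0 : ℝ) 1 ∧
        |MvPolynomial.eval
            (Sum.elim
              (fun jj : Fin M => ((Finset.univ.filter (fun i => f i = jj)).card : ℝ))
              (fun jj : Fin M => ((Finset.univ.filter (fun k => g k = jj)).card : ℝ))) Q -
          (if Φ f g then 1 else 0)| ≤ ε) ↔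
    (∃ Q' : MvPolynomial (Fin M' ⊕ Fin M') ℝ,
      Q'.totalDegree ≤ d ∧
      ∀ (f' : Fin F → Fin M') (g' : Fin G → Fin M'),
        MvPolynomial.eval
            (Sum.elim
              (fun jj : Fin M' => ((Finset.univ.filter (fun i => f' i = jj)).card : ℝ))
              (fun jj : Fin M' => ((Finset.univ.filter (fun k => g' k = jj)).card : ℝ))) Q' ∈
          Set.Icc (0 : ℝ) 1 ∧
        |MvPolynomial.eval
            (Sum.elim
              (fun jj : Fin M' => ((Finset.univ.filter (fun i => f' i = jj)).card : ℝ))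
              (fun jj : Fin M' => ((Finset.univ.filter (fun k => g' k = jj)).card : ℝ))) Q' -
          (if Φ (Fin.castLE hM'.le ∘ f') (Fin.castLE hM'.le ∘ g') then 1 else 0)| ≤ ε) := by
  set ι : Fin M' ↪ Fin M := Fin.castLEEmb hM'.le
  have hι : Injective (Sum.map ι ι) := Sum.map_injective.2 ⟨ι.injective, ι.injective⟩
  change (∃ Q, _ ∧ ∀ f g, ApproximatesBool ε (MvPolynomial.eval (countVec f g) Q) (Φ f g)) ↔
    (∃ Q', _ ∧ ∀ f' g',
      ApproximatesBool ε (MvPolynomial.eval (countVec f' g') Q') (Φ (ι ∘ f') (ι ∘ g')))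
  constructor
  · rintro ⟨Q, hdeg, hQ⟩
    refine ⟨killCompl hι Q, (totalDegree_killCompl_le hι Q).trans hdeg, fun f' g' => ?_⟩
    rw [← countVec_comp_sumMap ι.injective, eval_killCompl hι fun i hi =>
      countVec_eq_zero (Set.range_comp_subset_range _ _) (Set.range_comp_subset_range _ _) hi]
    exact hQ _ _
  · rintro ⟨Q', hdeg, hQ'⟩
    have hQ'_of_range_subset : ∀ (u : Fin M' ↪ Fin M) f g, Set.range f ⊆ Set.range u →
        Set.range g ⊆ Set.range u →
        ApproximatesBool ε (MvPolynomial.eval (countVec f g ∘ Sum.map u u) Q') (Φ f g) := by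
      intro u f g hf hg
      obtain ⟨f', rfl⟩ := Set.range_subset_range_iff_exists_comp.1 hf
      obtain ⟨g', rfl⟩ := Set.range_subset_range_iff_exists_comp.1 hg
      rw [countVec_comp_sumMap u.injective, apply_comp_embedding_eq_of_perm_invariant (Φ := Φ)
        (fun f g σ => by simpa using hsym f g 1 1 σ) u ι]
      exact hQ' f' g'
    refine ⟨bisymmetricExtension (Fin M) Q', (totalDegree_bisymmetricExtension_le Q').trans hdeg,
      fun f g => ?_⟩
    obtain ⟨e, hfe, hge⟩ := Embedding.exists_range_superset (α := Fin M') f g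
      (by simpa using hFG) (by simpa using hM'.le)
    rw [eval_bisymmetricExtension e fun i hi => countVec_eq_zero hfe hge hi]
    have hrange (τ : Equiv.Perm (Fin M')) : Set.range (τ.toEmbedding.trans e) = Set.range e :=
      EquivLike.range_comp _ _
    exact ApproximatesBool.expect fun τ =>
      hQ'_of_range_subset (τ.toEmbedding.trans e) f g (hrange τ ▸ hfe) (hrange τ ▸ hge)

open Classical in
/-- Range reduction for bisymmetric properties: for `M ≥ F + G` and
`F + G ≤ M' < M`, a degree-`d` `ε`-approximating polynomial in the preimage-count
variables `z_1,…,z_M, w_1,…,w_M` for `Φ` exists iff one in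
`z'_1,…,z'_{M'}, w'_1,…,w'_{M'}` for the restriction `Φ'` exists. -/
theorem stmt14 (F G M M' : ℕ) (hFG : F + G ≤ M') (hM' : M' < M) (d : ℕ) (ε : ℝ)
    (hε : 0 < ε) (hε2 : ε < 1 / 2)
    (Φ : (Fin F → Fin M) → (Fin G → Fin M) → Bool)
    (hsym : ∀ (f : Fin F → Fin M) (g : Fin G → Fin M) (πF : Equiv.Perm (Fin F))
      (πG : Equiv.Perm (Fin G)) (σ : Equiv.Perm (Fin M)),
      Φ (σ ∘ f ∘ πF) (σ ∘ g ∘ πG) = Φ f g) :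
    (∃ Q : MvPolynomial (Fin M ⊕ Fin M) ℝ,
      Q.totalDegree ≤ d ∧
      ∀ (f : Fin F → Fin M) (g : Fin G → Fin M),
        MvPolynomial.eval
            (Sum.elim
              (fun jj : Fin M => ((Finset.univ.filter (fun i => f i = jj)).card : ℝ))
              (fun jj : Fin M => ((Finset.univ.filter (fun k => g k = jj)).card : ℝ))) Q ∈
          Set.Icc (0 : ℝ) 1 ∧
        |MvPolynomial.eval
            (Sum.elim
              (fun jj : Fin M => ((Finset.univ.filter (fun i => f i = jj)).card : ℝ))
              (fun jj : Fin M => ((Finset.univ.filter (fun k => g k = jj)).card : ℝ))) Q -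
          (if Φ f g then 1 else 0)| ≤ ε) ↔
    (∃ Q' : MvPolynomial (Fin M' ⊕ Fin M') ℝ,
      Q'.totalDegree ≤ d ∧
      ∀ (f' : Fin F → Fin M') (g' : Fin G → Fin M'),
        MvPolynomial.eval
            (Sum.elim
              (fun jj : Fin M' => ((Finset.univ.filter (fun i => f' i = jj)).card : ℝ))
              (fun jj : Fin M' => ((Finset.univ.filter (fun k => g' k = jj)).card : ℝ))) Q' ∈
          Set.Icc (0 : ℝ) 1 ∧
        |MvPolynomial.eval
            (Sum.elim
              (fun jj : Fin M' => ((Finset.univ.filter (fun i => f' i = jj)).card : ℝ))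
              (fun jj : Fin M' => ((Finset.univ.filter (fun k => g' k = jj)).card : ℝ))) Q' -
          (if Φ (Fin.castLE hM'.le ∘ f') (Fin.castLE hM'.le ∘ g') then 1 else 0)| ≤ ε) :=
  stmt14_general F G M M' hFG hM' d ε Φ hsym
end

section
/- Suppose there exists a polynomial P' of degree d in variables x_{ij}, i ∈ S⊔T, j ∈ [M], that 0.1-approximates the claw property for every pair of disjoint subsets S, T ⊆ [M] with |S| = F, |T| = G, where M = FG and G ≥ F ≥ 400. Then the polynomial P̃ = (25·E_{S,T}[P'_{ST}] + 18)/43 has degree at most d and (41/86)-approximates the collision property on functions h : [M] → [M] promised to be one-to-one or two-to-one. -/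
/-!
If `h` is two-to-one, its fibres pair the points up by a fixed-point-free involution `σ`, and a
disjoint pair `(S, T)` contains a claw exactly when `σ s ∈ T` for some `s ∈ S`. Let `X(S, T)` count
such `s`. Over uniform disjoint pairs with `|S| = F`, `|T| = G`, `n = FG`, the first two moments of
`X` are explicit binomial expressions (two distinct `σ`-orbits involve four distinct points), and
the second moment method `P(X ≠ 0) ≥ (𝔼 X)² / 𝔼 X²` shows that at least half of the pairs contain
a claw. Hence the average of the approximators `P'_{ST}` is at most `0.1` on one-to-one functions
and at least `0.9 / 2` on two-to-one functions, and `E ↦ (25 E + 18) / 43` maps these ranges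
to within `41/86` of `0` and `1`.
-/

open Finset Function
open scoped BigOperators

lemma choose_mul_choose_mul_eq {n F G : ℕ} (hF : 1 ≤ F) (hG : 1 ≤ G) (hFG : F + G ≤ n) :
    F * G * (n.choose F * (n - F).choose G) =
      n * (n - 1) * ((n - 2).choose (F - 1) * (n - F - 1).choose (G - 1)) := by
  obtain ⟨f, rfl⟩ : ∃ f, F = f + 1 := ⟨F - 1, by omega⟩
  obtain ⟨g, rfl⟩ : ∃ g, G = g + 1 := ⟨G - 1, by omega⟩
  obtain ⟨m, rfl⟩ : ∃ m, n = m + 2 := ⟨n - 2, by omega⟩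
  have e1 := Nat.add_one_mul_choose_eq (m + 1) f
  have e2 := Nat.add_one_mul_choose_eq (m - f) g
  have e3 := Nat.choose_mul_succ_eq m f
  rw [show m + 1 - f = m - f + 1 by omega] at e3
  rw [show m + 2 - (f + 1) = m - f + 1 by omega, show m + 2 - 1 = m + 1 by omega,
    show m + 2 - 2 = m by omega, show m - f + 1 - 1 = m - f by omega, Nat.add_sub_cancel,
    Nat.add_sub_cancel]
  calc (f + 1) * (g + 1) * ((m + 2).choose (f + 1) * (m - f + 1).choose (g + 1))
      = ((m + 2).choose (f + 1) * (f + 1)) * ((m - f + 1).choose (g + 1) * (g + 1)) := by ring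
    _ = (m + 2) * ((m + 1).choose f * (m - f + 1)) * (m - f).choose g := by
      rw [← e1, ← e2]; ring
    _ = (m + 2) * (m + 1) * (m.choose f * (m - f).choose g) := by rw [← e3]; ring

lemma sq_sum_le_card_filter_ne_zero_mul_sum_sq {ι R : Type*} [Semiring R] [LinearOrder R]
    [IsStrictOrderedRing R] [ExistsAddOfLE R] (s : Finset ι) (f : ι → R) :
    (∑ i ∈ s, f i) ^ 2 ≤ (#(s.filter fun i => f i ≠ 0) : R) * ∑ i ∈ s, f i ^ 2 := by
  rw [← sum_filter_ne_zero]
  calc _ ≤ (#(s.filter fun i => f i ≠ 0) : R) * ∑ i ∈ s.filter (fun i => f i ≠ 0), f i ^ 2 :=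
        sq_sum_le_card_mul_sum_sq
    _ ≤ _ := by
        gcongr
        · exact fun i _ _ => sq_nonneg (f i)
        · exact filter_subset _ s

lemma mul_card_filter_div_card_le_expect {ι : Type*} {s : Finset ι} {f : ι → ℝ} {P : ι → Prop}
    [DecidablePred P] {c : ℝ} (hf : ∀ i ∈ s, 0 ≤ f i) (hP : ∀ i ∈ s, P i → c ≤ f i) :
    c * #(s.filter P) / #s ≤ 𝔼 i ∈ s, f i := by
  rw [expect_eq_sum_div_card]
  gcongr
  calc c * #(s.filter P) = ∑ _i ∈ s.filter P, c := by rw [sum_const, nsmul_eq_mul, mul_comm]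
    _ ≤ ∑ i ∈ s.filter P, f i := sum_le_sum fun i hi => hP i (mem_filter.1 hi).1 (mem_filter.1 hi).2
    _ ≤ ∑ i ∈ s, f i := sum_le_sum_of_subset_of_nonneg (filter_subset _ s) fun i hi _ => hf i hi

section DisjointPairs

variable {α : Type*} [Fintype α] [DecidableEq α]

variable (α) in
def disjointPairs (F G : ℕ) : Finset (Finset α × Finset α) :=
  (univ.powersetCard F ×ˢ univ.powersetCard G).filter fun p => Disjoint p.1 p.2

lemma mem_disjointPairs {F G : ℕ} {p : Finset α × Finset α} :
    p ∈ disjointPairs α F G ↔ #p.1 = F ∧ #p.2 = G ∧ Disjoint p.1 p.2 := by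
  simp [disjointPairs, and_assoc]

lemma card_powersetCard_univ_filter_disjoint_superset {k : ℕ} {S B : Finset α}
    (hBS : Disjoint B S) (hB : #B ≤ k) :
    #((univ.powersetCard k).filter fun T => Disjoint S T ∧ B ⊆ T) =
      (Fintype.card α - #S - #B).choose (k - #B) := by
  have hfilter : (univ.powersetCard k).filter (fun T => Disjoint S T ∧ B ⊆ T) =
      (Sᶜ.powersetCard k).filter (B ⊆ ·) := by
    ext T
    simp [subset_compl_iff_disjoint_left, and_left_comm, and_assoc]
  rw [hfilter, card_filter_powersetCard_subset _ _ _ (subset_compl_iff_disjoint_right.2 hBS) hB,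
    card_compl]

lemma card_disjointPairs_filter_subset {F G : ℕ} {A B : Finset α} (hAB : Disjoint A B)
    (hA : #A ≤ F) (hB : #B ≤ G) :
    #((disjointPairs α F G).filter fun p => A ⊆ p.1 ∧ B ⊆ p.2) =
      (Fintype.card α - #B - #A).choose (F - #A) * (Fintype.card α - F - #B).choose (G - #B) := by
  have inner : ∀ S ∈ univ.powersetCard F,
      #((univ.powersetCard G).filter fun T => Disjoint S T ∧ A ⊆ S ∧ B ⊆ T) =
        if Disjoint B S ∧ A ⊆ S then (Fintype.card α - F - #B).choose (G - #B) else 0 := by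
    intro S hS
    split_ifs with hS'
    · rw [← (mem_powersetCard.1 hS).2, ← card_powersetCard_univ_filter_disjoint_superset hS'.1 hB]
      exact congrArg card (filter_congr fun T _ => by simp [hS'.2])
    · refine card_eq_zero.2 (filter_eq_empty_iff.2 ?_)
      rintro T - ⟨hST, hAS, hBT⟩
      exact hS' ⟨disjoint_of_subset_left hBT hST.symm, hAS⟩
  rw [disjointPairs, filter_filter, card_filter, sum_product]
  simp_rw [← card_filter]
  rw [sum_congr rfl inner, ← sum_filter, sum_const, smul_eq_mul,
    card_powersetCard_univ_filter_disjoint_superset hAB hA]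

lemma card_disjointPairs (F G : ℕ) :
    #(disjointPairs α F G) = (Fintype.card α).choose F * (Fintype.card α - F).choose G := by
  simpa using card_disjointPairs_filter_subset (α := α) (F := F) (G := G)
    (disjoint_empty_left ∅) (Nat.zero_le _) (Nat.zero_le _)

lemma disjointPairs_nonempty {F G : ℕ} (h : F + G ≤ Fintype.card α) :
    (disjointPairs α F G).Nonempty := by
  rw [← card_pos, card_disjointPairs]
  exact Nat.mul_pos (Nat.choose_pos (by omega)) (Nat.choose_pos (by omega))

lemma card_disjointPairs_filter_mem {F G : ℕ} (hF : 1 ≤ F) (hG : 1 ≤ G) {a b : α}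
    (hab : a ≠ b) :
    #((disjointPairs α F G).filter fun p => a ∈ p.1 ∧ b ∈ p.2) =
      (Fintype.card α - 2).choose (F - 1) * (Fintype.card α - F - 1).choose (G - 1) := by
  have h := card_disjointPairs_filter_subset (F := F) (G := G) (disjoint_singleton.2 hab)
    (by simpa) (by simpa)
  simp only [singleton_subset_iff, card_singleton, Nat.sub_sub] at h
  exact h

lemma card_disjointPairs_filter_mem_mem {F G : ℕ} (hF : 2 ≤ F) (hG : 2 ≤ G) {a a' b b' : α}
    (ha : a ≠ a') (hb : b ≠ b') (hab : Disjoint ({a, a'} : Finset α) {b, b'}) :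
    #((disjointPairs α F G).filter fun p => (a ∈ p.1 ∧ b ∈ p.2) ∧ (a' ∈ p.1 ∧ b' ∈ p.2)) =
      (Fintype.card α - 4).choose (F - 2) * (Fintype.card α - F - 2).choose (G - 2) := by
  have h := card_disjointPairs_filter_subset (F := F) (G := G) hab
    (by rwa [card_pair ha]) (by rwa [card_pair hb])
  simp only [insert_subset_iff, singleton_subset_iff, card_pair ha, card_pair hb] at h
  rw [show Fintype.card α - 2 - 2 = Fintype.card α - 4 by omega] at h
  rw [← h]
  exact congrArg card (filter_congr fun p _ => by tauto)

end DisjointPairs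

section Partner

variable {α : Type*} [Fintype α] [DecidableEq α] {σ : α → α}

def clawCount (σ : α → α) (p : Finset α × Finset α) : ℕ :=
  #(univ.filter fun a => a ∈ p.1 ∧ σ a ∈ p.2)

lemma clawCount_ne_zero_iff {p : Finset α × Finset α} :
    clawCount σ p ≠ 0 ↔ ∃ s ∈ p.1, σ s ∈ p.2 := by
  simp [clawCount]

lemma sum_clawCount (hfix : ∀ a, σ a ≠ a) {F G : ℕ} (hF : 1 ≤ F) (hG : 1 ≤ G) :
    ∑ p ∈ disjointPairs α F G, clawCount σ p =
      Fintype.card α *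
        ((Fintype.card α - 2).choose (F - 1) * (Fintype.card α - F - 1).choose (G - 1)) := by
  simp only [clawCount, card_filter]
  rw [sum_comm]
  simp_rw [← card_filter]
  rw [sum_congr rfl fun a _ => card_disjointPairs_filter_mem hF hG (hfix a).symm, sum_const,
    card_univ, smul_eq_mul]

lemma sum_clawCount_sq (hσ : Involutive σ) (hfix : ∀ a, σ a ≠ a) {F G : ℕ}
    (hF : 2 ≤ F) (hG : 2 ≤ G) :
    ∑ p ∈ disjointPairs α F G, clawCount σ p ^ 2 =
      Fintype.card α *
        ((Fintype.card α - 2).choose (F - 1) * (Fintype.card α - F - 1).choose (G - 1) +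
          (Fintype.card α - 2) *
            ((Fintype.card α - 4).choose (F - 2) * (Fintype.card α - F - 2).choose (G - 2))) := by
  set c1 := (Fintype.card α - 2).choose (F - 1) * (Fintype.card α - F - 1).choose (G - 1)
  set c2 := (Fintype.card α - 4).choose (F - 2) * (Fintype.card α - F - 2).choose (G - 2)
  set N : α → α → ℕ := fun a b =>
    #((disjointPairs α F G).filter fun p => (a ∈ p.1 ∧ σ a ∈ p.2) ∧ (b ∈ p.1 ∧ σ b ∈ p.2))
  have hdiag : ∀ a, N a a = c1 := fun a =>
    (congrArg card (filter_congr fun p _ => and_self_iff)).trans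
      (card_disjointPairs_filter_mem (by omega) (by omega) (hfix a).symm)
  have hpartner : ∀ a, N a (σ a) = 0 := fun a => by
    refine card_eq_zero.2 (filter_eq_empty_iff.2 fun p hp => ?_)
    rintro ⟨⟨ha, -⟩, -, ha'⟩
    rw [hσ a] at ha'
    exact disjoint_left.1 (mem_disjointPairs.1 hp).2.2 ha ha'
  have hother : ∀ a b, b ≠ a → b ≠ σ a → N a b = c2 := fun a b hba hbσ => by
    refine card_disjointPairs_filter_mem_mem hF hG hba.symm (hσ.injective.ne hba.symm) ?_
    simp only [disjoint_insert_left, disjoint_insert_right, disjoint_singleton_left,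
      mem_insert, mem_singleton, not_or]
    exact ⟨⟨hfix a, fun h => hbσ h.symm⟩, fun h => hbσ (by rw [h, hσ b]), (hfix b).symm⟩
  have hrow : ∀ a, ∑ b, N a b = c1 + (Fintype.card α - 2) * c2 := fun a => by
    have hσa : σ a ∈ univ.erase a := mem_erase.2 ⟨hfix a, mem_univ _⟩
    rw [← add_sum_erase _ _ (mem_univ a), ← add_sum_erase _ _ hσa, hdiag, hpartner,
      sum_congr rfl fun b hb => hother a b (ne_of_mem_erase (mem_of_mem_erase hb))
        (ne_of_mem_erase hb),
      sum_const, card_erase_of_mem hσa, card_erase_of_mem (mem_univ a), card_univ, smul_eq_mul,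
      Nat.sub_sub, zero_add]
  calc ∑ p ∈ disjointPairs α F G, clawCount σ p ^ 2 = ∑ a, ∑ b, N a b := by
        simp only [N, clawCount, card_filter, sq, sum_mul_sum, ite_zero_mul_ite_zero, mul_one]
        rw [sum_comm]
        exact sum_congr rfl fun a _ => sum_comm
    _ = Fintype.card α * (c1 + (Fintype.card α - 2) * c2) := by
        rw [sum_congr rfl fun a _ => hrow a, sum_const, card_univ, smul_eq_mul]

lemma card_disjointPairs_le_two_mul_card_filter_claw (hσ : Involutive σ)
    (hfix : ∀ a, σ a ≠ a) {F G : ℕ} (hF : 2 ≤ F) (hG : 2 ≤ G) (hα : Fintype.card α = F * G) :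
    #(disjointPairs α F G) ≤ 2 * #((disjointPairs α F G).filter fun p => ∃ s ∈ p.1, σ s ∈ p.2) := by
  set n := Fintype.card α
  set c1 := (n - 2).choose (F - 1) * (n - F - 1).choose (G - 1)
  set c2 := (n - 4).choose (F - 2) * (n - F - 2).choose (G - 2)
  set x := #((disjointPairs α F G).filter fun p => ∃ s ∈ p.1, σ s ∈ p.2)
  have hsize : F + G ≤ n ∧ (F - 1) * (G - 1) + 3 ≤ n := by
    obtain ⟨f, rfl⟩ : ∃ f, F = f + 1 := ⟨F - 1, by omega⟩
    obtain ⟨g, rfl⟩ : ∃ g, G = g + 1 := ⟨G - 1, by omega⟩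
    simp only [n, hα, Nat.add_sub_cancel]
    constructor <;> nlinarith
  have hN : #(disjointPairs α F G) = (n - 1) * c1 := by
    have h := choose_mul_choose_mul_eq (by omega) (by omega) hsize.1
    rw [← hα, ← card_disjointPairs, mul_assoc n] at h
    exact Nat.eq_of_mul_eq_mul_left (by omega) h
  have hc : (F - 1) * (G - 1) * c1 = (n - 2) * (n - 3) * c2 := by
    have h := choose_mul_choose_mul_eq (n := n - 2) (F := F - 1) (G := G - 1) (by omega)
      (by omega) (by omega)
    rw [show n - 2 - (F - 1) = n - F - 1 by omega, show n - 2 - 1 = n - 3 by omega,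
      show n - 2 - 2 = n - 4 by omega, show F - 1 - 1 = F - 2 by omega,
      show G - 1 - 1 = G - 2 by omega, show n - F - 1 - 1 = n - F - 2 by omega] at h
    exact h
  have hc1 : 0 < c1 := Nat.mul_pos (Nat.choose_pos (by omega)) (Nat.choose_pos (by omega))
  have hsecond : (n * c1) ^ 2 ≤ x * (n * (c1 + (n - 2) * c2)) := by
    rw [← sum_clawCount hfix (by omega) (by omega), ← sum_clawCount_sq hσ hfix hF hG]
    simpa only [ne_eq, clawCount_ne_zero_iff, Nat.cast_id] using
      sq_sum_le_card_filter_ne_zero_mul_sum_sq (disjointPairs α F G) (clawCount σ)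
  have hmoment : n * c1 * c1 ≤ x * (c1 + (n - 2) * c2) :=
    Nat.le_of_mul_le_mul_left (by linarith [hsecond]) (by omega : 0 < n)
  have key : (n - 3) * (n * c1) * c1 ≤ (n - 3) * (2 * x) * c1 :=
    calc (n - 3) * (n * c1) * c1 = (n - 3) * (n * c1 * c1) := by ring
      _ ≤ (n - 3) * (x * (c1 + (n - 2) * c2)) := by gcongr
      _ = x * ((n - 3) * c1 + (F - 1) * (G - 1) * c1) := by rw [hc]; ring
      _ ≤ x * ((n - 3) * c1 + (n - 3) * c1) := by gcongr; omega
      _ = (n - 3) * (2 * x) * c1 := by ring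
  calc #(disjointPairs α F G) = (n - 1) * c1 := hN
    _ ≤ n * c1 := by gcongr; omega
    _ ≤ 2 * x := Nat.le_of_mul_le_mul_left (Nat.le_of_mul_le_mul_right key hc1) (by omega)

lemma exists_involutive_of_card_fiber_eq_two {β : Type*} [DecidableEq β] {h : α → β}
    (hh : ∀ a, #(univ.filter fun a' => h a' = h a) = 2) :
    ∃ σ : α → α, Involutive σ ∧ (∀ a, σ a ≠ a) ∧ ∀ a b, h b = h a ↔ b = a ∨ b = σ a := by
  have hpartner : ∀ a, ∃ b, (univ.filter fun a' => h a' = h a).erase a = {b} := fun a => by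
    rw [← card_eq_one, card_erase_of_mem (by simp), hh a]
  choose σ hσ using hpartner
  have hmem : ∀ a b, b ≠ a ∧ h b = h a ↔ b = σ a := fun a b => by
    simpa only [mem_erase, mem_filter, mem_univ, true_and, mem_singleton] using
      Finset.ext_iff.1 (hσ a) b
  have hfix : ∀ a, σ a ≠ a := fun a => ((hmem a (σ a)).2 rfl).1
  have hfiber : ∀ a b, h b = h a ↔ b = a ∨ b = σ a := fun a b => by
    by_cases hba : b = a
    · simp [hba]
    · simp [hba, ← hmem]
  refine ⟨σ, fun a => ?_, hfix, hfiber⟩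
  have h1 := (hfiber a (σ a)).2 (Or.inr rfl)
  have h2 := (hfiber (σ a) (σ (σ a))).2 (Or.inr rfl)
  rcases (hfiber a (σ (σ a))).1 (h2.trans h1) with h | h
  · exact h
  · exact absurd h (hfix (σ a))

end Partner

lemma exists_claw_iff {α β : Type*} {σ : α → α} {h : α → β}
    (hσ : ∀ a b, h b = h a ↔ b = a ∨ b = σ a) {S T : Finset α} (hST : Disjoint S T) :
    (∃ s ∈ S, ∃ t ∈ T, h s = h t) ↔ ∃ s ∈ S, σ s ∈ T := by
  constructor
  · rintro ⟨s, hs, t, ht, hst⟩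
    rcases (hσ s t).1 hst.symm with rfl | rfl
    · exact absurd ht (disjoint_left.1 hST hs)
    · exact ⟨s, hs, ht⟩
  · rintro ⟨s, hs, ht⟩
    exact ⟨s, hs, σ s, ht, ((hσ s (σ s)).2 (Or.inr rfl)).symm⟩

lemma div_two_le_expect_of_card_fiber_eq_two {α β : Type*} [Fintype α] [DecidableEq α]
    [DecidableEq β] {h : α → β} (hh : ∀ a, #(univ.filter fun a' => h a' = h a) = 2)
    {F G : ℕ} (hF : 2 ≤ F) (hG : 2 ≤ G) (hα : Fintype.card α = F * G)
    {v : Finset α × Finset α → ℝ} {c : ℝ} (hc : 0 ≤ c)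
    (hv0 : ∀ p ∈ disjointPairs α F G, 0 ≤ v p)
    (hv : ∀ p ∈ disjointPairs α F G, (∃ s ∈ p.1, ∃ t ∈ p.2, h s = h t) → c ≤ v p) :
    c / 2 ≤ 𝔼 p ∈ disjointPairs α F G, v p := by
  obtain ⟨σ, hσ, hfix, hfiber⟩ := exists_involutive_of_card_fiber_eq_two hh
  have hclaw : ∀ p ∈ disjointPairs α F G, (∃ s ∈ p.1, σ s ∈ p.2) → c ≤ v p := fun p hp hp' =>
    hv p hp ((exists_claw_iff hfiber (mem_disjointPairs.1 hp).2.2).2 hp')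
  refine le_trans ?_ (mul_card_filter_div_card_le_expect hv0 hclaw)
  have hpos : (0 : ℝ) < #(disjointPairs α F G) := by
    exact_mod_cast (disjointPairs_nonempty (by rw [hα]; nlinarith)).card_pos
  have hhalf : (#(disjointPairs α F G) : ℝ) ≤
      2 * #((disjointPairs α F G).filter fun p => ∃ s ∈ p.1, σ s ∈ p.2) := by
    exact_mod_cast card_disjointPairs_le_two_mul_card_filter_claw hσ hfix hF hG hα
  rw [le_div_iff₀ hpos]
  nlinarith

lemma totalDegree_C_mul_add_C_le {σ R : Type*} [CommSemiring R] {p : MvPolynomial σ R} {d : ℕ}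
    (hp : p.totalDegree ≤ d) (a b : R) :
    (MvPolynomial.C a * p + MvPolynomial.C b).totalDegree ≤ d := by
  refine (MvPolynomial.totalDegree_add _ _).trans (max_le ?_ (by simp))
  exact (MvPolynomial.totalDegree_mul _ _).trans (by simpa using hp)

lemma rescale_mem_Icc {E : ℝ} (h0 : 0 ≤ E) (h1 : E ≤ 1) :
    (25 * E + 18) / 43 ∈ Set.Icc (0 : ℝ) 1 :=
  ⟨by positivity, by linarith⟩

lemma abs_rescale_le {E : ℝ} (h0 : 0 ≤ E) (h1 : E ≤ 0.1) :
    |(25 * E + 18) / 43 - 0| ≤ 41 / 86 := by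
  rw [sub_zero, abs_of_nonneg (by positivity)]
  linarith

lemma abs_rescale_sub_one_le {E : ℝ} (h0 : 0.18 ≤ E) (h1 : E ≤ 1) :
    |(25 * E + 18) / 43 - 1| ≤ 41 / 86 := by
  rw [abs_le]
  constructor <;> linarith

lemma le_of_abs_sub_ite_le {c : Prop} [Decidable c] {v ε : ℝ}
    (hv : |v - if c then 1 else 0| ≤ ε) : (c → 1 - ε ≤ v) ∧ (¬c → v ≤ ε) := by
  constructor <;> intro hc <;> simp only [hc, if_true, if_false, sub_zero] at hv <;>
    linarith [abs_le.1 hv]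

open Classical in
theorem stmt18_general (F G M d : ℕ) (hF : 400 ≤ F) (hFG : F ≤ G) (hM : M = F * G)
    (P' : Finset (Fin M) → Finset (Fin M) → MvPolynomial (Fin M × Fin M) ℝ)
    (hdeg : ∀ S T : Finset (Fin M), S.card = F → T.card = G → Disjoint S T →
      (P' S T).totalDegree ≤ d)
    (happrox : ∀ S T : Finset (Fin M), S.card = F → T.card = G → Disjoint S T →
      ∀ h : Fin M → Fin M,
        MvPolynomial.eval (fun v : Fin M × Fin M => if h v.1 = v.2 then (1 : ℝ) else 0)
            (P' S T) ∈ Set.Icc (0 : ℝ) 1 ∧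
        |MvPolynomial.eval (fun v : Fin M × Fin M => if h v.1 = v.2 then (1 : ℝ) else 0)
            (P' S T) -
          (if ∃ s ∈ S, ∃ t ∈ T, h s = h t then 1 else 0)| ≤ 0.1) :
    let pairs := (Finset.powersetCard F (Finset.univ : Finset (Fin M)) ×ˢ
        Finset.powersetCard G (Finset.univ : Finset (Fin M))).filter
        (fun p => Disjoint p.1 p.2)
    let Ptilde := MvPolynomial.C ((25 : ℝ) / (43 * pairs.card)) *
        (∑ p ∈ pairs, P' p.1 p.2) + MvPolynomial.C ((18 : ℝ) / 43)
    Ptilde.totalDegree ≤ d ∧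
    (∀ h : Fin M → Fin M, Function.Injective h →
      MvPolynomial.eval (fun v : Fin M × Fin M => if h v.1 = v.2 then (1 : ℝ) else 0)
          Ptilde ∈ Set.Icc (0 : ℝ) 1 ∧
      |MvPolynomial.eval (fun v : Fin M × Fin M => if h v.1 = v.2 then (1 : ℝ) else 0)
          Ptilde - 0| ≤ 41 / 86) ∧
    (∀ h : Fin M → Fin M,
      (∀ i : Fin M, (Finset.univ.filter (fun i' => h i' = h i)).card = 2) →
      MvPolynomial.eval (fun v : Fin M × Fin M => if h v.1 = v.2 then (1 : ℝ) else 0)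
          Ptilde ∈ Set.Icc (0 : ℝ) 1 ∧
      |MvPolynomial.eval (fun v : Fin M × Fin M => if h v.1 = v.2 then (1 : ℝ) else 0)
          Ptilde - 1| ≤ 41 / 86) := by
  intro pairs Ptilde
  set ev : (Fin M → Fin M) → Finset (Fin M) × Finset (Fin M) → ℝ := fun h p =>
    MvPolynomial.eval (fun v => if h v.1 = v.2 then 1 else 0) (P' p.1 p.2)
  have hmem : ∀ p ∈ pairs, #p.1 = F ∧ #p.2 = G ∧ Disjoint p.1 p.2 :=
    fun p hp => mem_disjointPairs.1 hp
  have hne : pairs.Nonempty :=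
    disjointPairs_nonempty (by simp only [Fintype.card_fin, hM]; nlinarith)
  have heval : ∀ h : Fin M → Fin M,
      MvPolynomial.eval (fun v : Fin M × Fin M => if h v.1 = v.2 then (1 : ℝ) else 0) Ptilde =
        (25 * 𝔼 p ∈ pairs, ev h p + 18) / 43 := fun h => by
    simp only [Ptilde, map_add, map_mul, MvPolynomial.eval_C, map_sum, expect_eq_sum_div_card]
    ring
  have hev : ∀ h : Fin M → Fin M, ∀ p ∈ pairs, ev h p ∈ Set.Icc 0 1 ∧
      ((∃ s ∈ p.1, ∃ t ∈ p.2, h s = h t) → 1 - 0.1 ≤ ev h p) ∧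
      (¬(∃ s ∈ p.1, ∃ t ∈ p.2, h s = h t) → ev h p ≤ 0.1) := fun h p hp =>
    have happ := happrox _ _ (hmem p hp).1 (hmem p hp).2.1 (hmem p hp).2.2 h
    ⟨happ.1, le_of_abs_sub_ite_le happ.2⟩
  refine ⟨totalDegree_C_mul_add_C_le (MvPolynomial.totalDegree_finsetSum_le fun p hp =>
      hdeg _ _ (hmem p hp).1 (hmem p hp).2.1 (hmem p hp).2.2) _ _, fun h hinj => ?_, fun h hh => ?_⟩
  · have h0 := expect_nonneg fun p hp => (hev h p hp).1.1
    have h1 := expect_le hne fun p hp => (hev h p hp).2.2 fun ⟨s, hs, t, ht, hst⟩ =>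
      disjoint_left.1 (hmem p hp).2.2 hs (hinj hst ▸ ht)
    rw [heval]
    exact ⟨rescale_mem_Icc h0 (by linarith), abs_rescale_le h0 h1⟩
  · have h0 : (1 - 0.1) / 2 ≤ 𝔼 p ∈ pairs, ev h p :=
      div_two_le_expect_of_card_fiber_eq_two hh (by omega) (by omega)
        (by rw [Fintype.card_fin, hM]) (by norm_num) (fun p hp => (hev h p hp).1.1)
        fun p hp => (hev h p hp).2.1
    have h1 := expect_le hne fun p hp => (hev h p hp).1.2
    rw [heval]
    exact ⟨rescale_mem_Icc (by linarith) h1, abs_rescale_sub_one_le (by linarith) h1⟩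

open Classical in
/-- Zhang-style reduction: from a family of degree-`d` polynomials `P'_{ST}` that
0.1-approximate the claw property on disjoint `(S,T)` with `|S| = F`, `|T| = G`,
`M = FG`, `G ≥ F ≥ 400`, the polynomial `P̃ = (25·E_{S,T}[P'_{ST}] + 18)/43` has
degree at most `d` and `(41/86)`-approximates the collision property on functions
`h : [M] → [M]` promised to be one-to-one or two-to-one. -/
theorem stmt18 (F G M d : ℕ) (hF : 400 ≤ F) (hFG : F ≤ G) (hM : M = F * G)
    (P' : Finset (Fin M) → Finset (Fin M) → MvPolynomial (Fin M × Fin M) ℝ)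
    (hdeg : ∀ S T : Finset (Fin M), S.card = F → T.card = G → Disjoint S T →
      (P' S T).totalDegree ≤ d)
    (hvars : ∀ S T : Finset (Fin M), S.card = F → T.card = G → Disjoint S T →
      ∀ v ∈ (P' S T).vars, v.1 ∈ S ∪ T)
    (happrox : ∀ S T : Finset (Fin M), S.card = F → T.card = G → Disjoint S T →
      ∀ h : Fin M → Fin M,
        MvPolynomial.eval (fun v : Fin M × Fin M => if h v.1 = v.2 then (1 : ℝ) else 0)
            (P' S T) ∈ Set.Icc (0 : ℝ) 1 ∧
        |MvPolynomial.eval (fun v : Fin M × Fin M => if h v.1 = v.2 then (1 : ℝ) else 0)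
            (P' S T) -
          (if ∃ s ∈ S, ∃ t ∈ T, h s = h t then 1 else 0)| ≤ 0.1) :
    let pairs := (Finset.powersetCard F (Finset.univ : Finset (Fin M)) ×ˢ
        Finset.powersetCard G (Finset.univ : Finset (Fin M))).filter
        (fun p => Disjoint p.1 p.2)
    let Ptilde := MvPolynomial.C ((25 : ℝ) / (43 * pairs.card)) *
        (∑ p ∈ pairs, P' p.1 p.2) + MvPolynomial.C ((18 : ℝ) / 43)
    Ptilde.totalDegree ≤ d ∧
    (∀ h : Fin M → Fin M, Function.Injective h →
      MvPolynomial.eval (fun v : Fin M × Fin M => if h v.1 = v.2 then (1 : ℝ) else 0)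
          Ptilde ∈ Set.Icc (0 : ℝ) 1 ∧
      |MvPolynomial.eval (fun v : Fin M × Fin M => if h v.1 = v.2 then (1 : ℝ) else 0)
          Ptilde - 0| ≤ 41 / 86) ∧
    (∀ h : Fin M → Fin M,
      (∀ i : Fin M, (Finset.univ.filter (fun i' => h i' = h i)).card = 2) →
      MvPolynomial.eval (fun v : Fin M × Fin M => if h v.1 = v.2 then (1 : ℝ) else 0)
          Ptilde ∈ Set.Icc (0 : ℝ) 1 ∧
      |MvPolynomial.eval (fun v : Fin M × Fin M => if h v.1 = v.2 then (1 : ℝ) else 0)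
          Ptilde - 1| ≤ 41 / 86) :=
  stmt18_general F G M d hF hFG hM P' hdeg happrox
end
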